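/- arXiv:1411.5229 — 2 statements merged into one kernel-verified Lean document; each statement's English description precedes it below -/
import Mathlib

section
/- Suppose 0 < α ≤ 1. For every y ∈ U and all 0 ≤ x₁ ≤ x₂ ≤ h, |(Ay)(x₁) − (Ay)(x₂) + T(x₂) − T(x₁)| ≤ (2M / (ρ^α Γ(α+1))) (x₂^ρ − x₁^ρ)^α. -/
open Set MeasureTheory intervalIntegral

/-!
The kernel `(x^ρ - t^ρ)^(α-1) t^(ρ-1)` has the explicit primitive `-(x^ρ - t^ρ)^α / (ρα)` in `t`.
Writing `(Ay)(x₁) - (Ay)(x₂) + T(x₂) - T(x₁)` as the integral over `[0, x₁]` of the difference of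
the kernels at `x₁` and `x₂`, minus the integral over `[x₁, x₂]` of the kernel at `x₂`, both pieces
have a nonnegative weight (for the first one because `α ≤ 1` makes the kernel decreasing in `x`),
so each is bounded by `M` times the exact integral of its weight, which is at most
`(x₂^ρ - x₁^ρ)^α / (ρα)`. The constant `M` bounds `f (t, y t)` because `G` is compact.
-/

noncomputable section

def katugampolaKernel (ρ α c t : ℝ) : ℝ := (c - t ^ ρ) ^ (α - 1) * t ^ (ρ - 1)

def katugampolaIntegral (ρ α : ℝ) (g : ℝ → ℝ) (x : ℝ) : ℝ :=
  ρ ^ (1 - α) / Real.Gamma α * ∫ t in (0 : ℝ)..x, katugampolaKernel ρ α (x ^ ρ) t * g t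

end

section Kernel

variable {ρ α c a b t : ℝ}

theorem katugampolaKernel_nonneg (ht : 0 ≤ t) (htc : t ^ ρ ≤ c) :
    0 ≤ katugampolaKernel ρ α c t :=
  mul_nonneg (Real.rpow_nonneg (sub_nonneg.2 htc) _) (Real.rpow_nonneg ht _)

-- `t ^ ρ < c` cannot be relaxed: at `t ^ ρ = c` the kernel takes the junk value `0 ^ (α - 1) = 0`.
theorem katugampolaKernel_le_of_le {c' : ℝ} (hα1 : α ≤ 1) (ht : 0 ≤ t) (htc : t ^ ρ < c)
    (hcc' : c ≤ c') : katugampolaKernel ρ α c' t ≤ katugampolaKernel ρ α c t :=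
  mul_le_mul_of_nonneg_right
    (Real.rpow_le_rpow_of_nonpos (sub_pos.2 htc) (by linarith) (by linarith))
    (Real.rpow_nonneg ht _)

theorem hasDerivAt_katugampolaKernel_primitive (hρ : ρ ≠ 0) (hα : α ≠ 0) (ht : 0 < t)
    (htc : t ^ ρ < c) :
    HasDerivAt (fun s ↦ -(c - s ^ ρ) ^ α / (ρ * α)) (katugampolaKernel ρ α c t) t := by
  have hpow : HasDerivAt (fun s ↦ c - s ^ ρ) (-(ρ * t ^ (ρ - 1))) t :=
    (Real.hasDerivAt_rpow_const (Or.inl ht.ne')).const_sub c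
  have hout : HasDerivAt (fun v ↦ v ^ α) (α * (c - t ^ ρ) ^ (α - 1)) (c - t ^ ρ) :=
    Real.hasDerivAt_rpow_const (Or.inl (sub_pos.2 htc).ne')
  refine ((hout.comp t hpow).neg.div_const (ρ * α)).congr_deriv ?_
  unfold katugampolaKernel
  field_simp

theorem continuous_katugampolaKernel_primitive (hρ : 0 ≤ ρ) (hα : 0 ≤ α) :
    Continuous fun s ↦ -(c - s ^ ρ) ^ α / (ρ * α) :=
  ((Real.continuous_rpow_const hα).comp
    (continuous_const.sub (Real.continuous_rpow_const hρ))).neg.div_const _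

theorem intervalIntegrable_katugampolaKernel (hρ : 0 < ρ) (hα : 0 < α) (ha : 0 ≤ a)
    (hab : a ≤ b) (hbc : b ^ ρ ≤ c) :
    IntervalIntegrable (katugampolaKernel ρ α c) volume a b := by
  refine intervalIntegrable_deriv_of_nonneg
    (continuous_katugampolaKernel_primitive (c := c) hρ.le hα.le).continuousOn
    (fun t ht ↦ ?_) (fun t ht ↦ ?_)
  all_goals
    rw [min_eq_left hab, max_eq_right hab] at ht
    have ht0 : 0 < t := ha.trans_lt ht.1
  · exact hasDerivAt_katugampolaKernel_primitive hρ.ne' hα.ne' ht0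
      ((Real.rpow_lt_rpow ht0.le ht.2 hρ).trans_le hbc)
  · exact katugampolaKernel_nonneg ht0.le ((Real.rpow_le_rpow ht0.le ht.2.le hρ.le).trans hbc)

theorem integral_katugampolaKernel (hρ : 0 < ρ) (hα : 0 < α) (ha : 0 ≤ a) (hab : a ≤ b)
    (hbc : b ^ ρ ≤ c) :
    ∫ t in a..b, katugampolaKernel ρ α c t = ((c - a ^ ρ) ^ α - (c - b ^ ρ) ^ α) / (ρ * α) := by
  rw [integral_eq_sub_of_hasDeriv_right_of_le hab
    (continuous_katugampolaKernel_primitive hρ.le hα.le).continuousOn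
    (fun t ht ↦ (hasDerivAt_katugampolaKernel_primitive hρ.ne' hα.ne' (ha.trans_lt ht.1)
      ((Real.rpow_lt_rpow (ha.trans_lt ht.1).le ht.2 hρ).trans_le hbc)).hasDerivWithinAt)
    (intervalIntegrable_katugampolaKernel hρ hα ha hab hbc)]
  ring

end Kernel

theorem abs_integral_mul_le_mul_integral {k g : ℝ → ℝ} {a b M : ℝ} (hab : a ≤ b)
    (hk : IntervalIntegrable k volume a b) (hk0 : ∀ t ∈ Ioo a b, 0 ≤ k t)
    (hg : ∀ t ∈ Ioo a b, |g t| ≤ M) :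
    |∫ t in a..b, k t * g t| ≤ M * ∫ t in a..b, k t := by
  rw [← intervalIntegral.integral_const_mul, ← Real.norm_eq_abs]
  refine norm_integral_le_of_norm_le hab ?_ (hk.const_mul M)
  filter_upwards [Measure.ae_ne volume b] with t htb ht
  have ht' : t ∈ Ioo a b := ⟨ht.1, ht.2.lt_of_ne htb⟩
  rw [Real.norm_eq_abs, abs_mul, abs_of_nonneg (hk0 t ht'), mul_comm]
  exact mul_le_mul_of_nonneg_right (hg t ht') (hk0 t ht')

section Estimate

variable {ρ α M x₁ x₂ : ℝ} {g : ℝ → ℝ}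

theorem abs_integral_katugampolaKernel_mul_sub_le (hρ : 0 < ρ) (hα : 0 < α) (hα1 : α ≤ 1)
    (h₁ : 0 ≤ x₁) (h₁₂ : x₁ ≤ x₂) (hg : ContinuousOn g (Icc 0 x₂))
    (hgM : ∀ t ∈ Icc 0 x₂, |g t| ≤ M) :
    |(∫ t in (0 : ℝ)..x₁, katugampolaKernel ρ α (x₁ ^ ρ) t * g t) -
        ∫ t in (0 : ℝ)..x₂, katugampolaKernel ρ α (x₂ ^ ρ) t * g t| ≤
      2 * M / (ρ * α) * (x₂ ^ ρ - x₁ ^ ρ) ^ α := by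
  set k₁ := katugampolaKernel ρ α (x₁ ^ ρ)
  set k₂ := katugampolaKernel ρ α (x₂ ^ ρ)
  have hx : x₁ ^ ρ ≤ x₂ ^ ρ := Real.rpow_le_rpow h₁ h₁₂ hρ.le
  have hM : 0 ≤ M := (abs_nonneg _).trans (hgM 0 ⟨le_rfl, h₁.trans h₁₂⟩)
  have hk₁ := intervalIntegrable_katugampolaKernel hρ hα le_rfl h₁ (le_refl (x₁ ^ ρ))
  have hk₂ := intervalIntegrable_katugampolaKernel (α := α) hρ hα le_rfl h₁ hx
  have hk₂' := intervalIntegrable_katugampolaKernel (α := α) hρ hα h₁ h₁₂ le_rfl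
  have hg₁ : ContinuousOn g (uIcc 0 x₁) := by
    rw [uIcc_of_le h₁]; exact hg.mono (Icc_subset_Icc_right h₁₂)
  have hg₂ : ContinuousOn g (uIcc x₁ x₂) := by
    rw [uIcc_of_le h₁₂]; exact hg.mono (Icc_subset_Icc_left h₁)
  have hsplit : (∫ t in (0 : ℝ)..x₁, k₁ t * g t) - ∫ t in (0 : ℝ)..x₂, k₂ t * g t =
      (∫ t in (0 : ℝ)..x₁, (k₁ t - k₂ t) * g t) - ∫ t in x₁..x₂, k₂ t * g t := by
    rw [← integral_add_adjacent_intervals (hk₂.mul_continuousOn hg₁)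
      (hk₂'.mul_continuousOn hg₂)]
    simp only [sub_mul]
    rw [integral_sub (hk₁.mul_continuousOn hg₁) (hk₂.mul_continuousOn hg₁)]
    ring
  have hnear : |∫ t in (0 : ℝ)..x₁, (k₁ t - k₂ t) * g t| ≤
      M * (((x₁ ^ ρ) ^ α - (x₂ ^ ρ) ^ α + (x₂ ^ ρ - x₁ ^ ρ) ^ α) / (ρ * α)) := by
    refine (abs_integral_mul_le_mul_integral h₁ (hk₁.sub hk₂)
      (fun t ht ↦ sub_nonneg.2 (katugampolaKernel_le_of_le hα1 ht.1.le
        (Real.rpow_lt_rpow ht.1.le ht.2 hρ) hx))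
      (fun t ht ↦ hgM t ⟨ht.1.le, ht.2.le.trans h₁₂⟩)).trans_eq ?_
    rw [integral_sub hk₁ hk₂, integral_katugampolaKernel hρ hα le_rfl h₁ le_rfl,
      integral_katugampolaKernel hρ hα le_rfl h₁ hx]
    simp only [Real.zero_rpow hρ.ne', sub_zero, sub_self, Real.zero_rpow hα.ne']
    ring
  have hfar : |∫ t in x₁..x₂, k₂ t * g t| ≤ M * ((x₂ ^ ρ - x₁ ^ ρ) ^ α / (ρ * α)) := by
    refine (abs_integral_mul_le_mul_integral h₁₂ hk₂'
      (fun t ht ↦ katugampolaKernel_nonneg (h₁.trans ht.1.le)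
        (Real.rpow_le_rpow (h₁.trans ht.1.le) ht.2.le hρ.le))
      (fun t ht ↦ hgM t ⟨h₁.trans ht.1.le, ht.2.le⟩)).trans_eq ?_
    rw [integral_katugampolaKernel hρ hα h₁ h₁₂ le_rfl]
    simp only [sub_self, Real.zero_rpow hα.ne', sub_zero]
  have hpow : (x₁ ^ ρ) ^ α ≤ (x₂ ^ ρ) ^ α := Real.rpow_le_rpow (Real.rpow_nonneg h₁ ρ) hx hα.le
  have hdrop : M * (((x₁ ^ ρ) ^ α - (x₂ ^ ρ) ^ α + (x₂ ^ ρ - x₁ ^ ρ) ^ α) / (ρ * α)) ≤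
      M * ((x₂ ^ ρ - x₁ ^ ρ) ^ α / (ρ * α)) := by
    have : 0 < ρ * α := mul_pos hρ hα
    gcongr
    linarith
  calc _ = |(∫ t in (0 : ℝ)..x₁, (k₁ t - k₂ t) * g t) - ∫ t in x₁..x₂, k₂ t * g t| := by
        rw [hsplit]
    _ ≤ |∫ t in (0 : ℝ)..x₁, (k₁ t - k₂ t) * g t| + |∫ t in x₁..x₂, k₂ t * g t| := abs_sub _ _
    _ ≤ M * ((x₂ ^ ρ - x₁ ^ ρ) ^ α / (ρ * α)) + M * ((x₂ ^ ρ - x₁ ^ ρ) ^ α / (ρ * α)) :=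
        add_le_add (hnear.trans hdrop) hfar
    _ = 2 * M / (ρ * α) * (x₂ ^ ρ - x₁ ^ ρ) ^ α := by ring

theorem abs_katugampolaIntegral_sub_le (hρ : 0 < ρ) (hα : 0 < α) (hα1 : α ≤ 1)
    (h₁ : 0 ≤ x₁) (h₁₂ : x₁ ≤ x₂) (hg : ContinuousOn g (Icc 0 x₂))
    (hgM : ∀ t ∈ Icc 0 x₂, |g t| ≤ M) :
    |katugampolaIntegral ρ α g x₁ - katugampolaIntegral ρ α g x₂| ≤
      2 * M / (ρ ^ α * Real.Gamma (α + 1)) * (x₂ ^ ρ - x₁ ^ ρ) ^ α := by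
  have hc : 0 < ρ ^ (1 - α) / Real.Gamma α :=
    div_pos (Real.rpow_pos_of_pos hρ _) (Real.Gamma_pos_of_pos hα)
  calc _ = ρ ^ (1 - α) / Real.Gamma α *
        |(∫ t in (0 : ℝ)..x₁, katugampolaKernel ρ α (x₁ ^ ρ) t * g t) -
          ∫ t in (0 : ℝ)..x₂, katugampolaKernel ρ α (x₂ ^ ρ) t * g t| := by
        rw [katugampolaIntegral, katugampolaIntegral, ← mul_sub, abs_mul, abs_of_pos hc]
    _ ≤ ρ ^ (1 - α) / Real.Gamma α * (2 * M / (ρ * α) * (x₂ ^ ρ - x₁ ^ ρ) ^ α) :=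
        mul_le_mul_of_nonneg_left
          (abs_integral_katugampolaKernel_mul_sub_le hρ hα hα1 h₁ h₁₂ hg hgM) hc.le
    _ = _ := by
        rw [Real.rpow_sub hρ, Real.rpow_one, Real.Gamma_add_one hα.ne']
        field_simp

end Estimate

theorem IsCompact.setOf_abs_sub_le {s : Set ℝ} (hs : IsCompact s) {T : ℝ → ℝ}
    (hT : Continuous T) (K : ℝ) : IsCompact {p : ℝ × ℝ | p.1 ∈ s ∧ |p.2 - T p.1| ≤ K} := by
  have hshear : {p : ℝ × ℝ | p.1 ∈ s ∧ |p.2 - T p.1| ≤ K} =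
      (fun q : ℝ × ℝ ↦ (q.1, q.2 + T q.1)) '' (s ×ˢ Icc (-K) K) := by
    ext ⟨x, y⟩
    simp only [mem_ofPred_eq, mem_image, mem_prod, mem_Icc, Prod.exists, Prod.mk.injEq, abs_le]
    constructor
    · rintro ⟨hx, hy⟩
      exact ⟨x, y - T x, ⟨hx, by linarith, by linarith⟩, rfl, by ring⟩
    · rintro ⟨x, z, ⟨hx, hz⟩, rfl, rfl⟩
      exact ⟨hx, by simpa using hz⟩
  rw [hshear]
  exact (hs.prod isCompact_Icc).image (by fun_prop)

theorem stmt5_general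
    (ρ α : ℝ) (hρ : 0 < ρ) (hα : 0 < α)
    (m : ℕ)
    (y₀ : ℕ → ℝ) (K hstar : ℝ)
    (T : ℝ → ℝ)
    (hT : ∀ x : ℝ, T x = ∑ k ∈ Finset.range m, x ^ k / (Nat.factorial k) * y₀ k)
    (f : ℝ → ℝ → ℝ)
    (G : Set (ℝ × ℝ))
    (hG : G = {p : ℝ × ℝ | p.1 ∈ Set.Icc 0 hstar ∧ |p.2 - T p.1| ≤ K})
    (hf : ContinuousOn (fun p : ℝ × ℝ => f p.1 p.2) G)
    (M : ℝ) (hM : M = sSup ((fun p : ℝ × ℝ => |f p.1 p.2|) '' G))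
    (h : ℝ)
    (hh : h = if M = 0 then hstar
      else min hstar ((K * Real.Gamma (α + 1) * ρ ^ α / M) ^ (1 / α)))
    (A : (ℝ → ℝ) → ℝ → ℝ)
    (hA : ∀ (y : ℝ → ℝ) (x : ℝ), A y x = T x + ρ ^ (1 - α) / Real.Gamma α *
      ∫ t in (0:ℝ)..x, (x ^ ρ - t ^ ρ) ^ (α - 1) * t ^ (ρ - 1) * f t (y t))
    (hα1 : α ≤ 1)
    (y : ℝ → ℝ)
    (hy : ContinuousOn y (Set.Icc 0 h) ∧ ∀ s ∈ Set.Icc 0 h, |y s - T s| ≤ K)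
    (x₁ x₂ : ℝ) (h1 : 0 ≤ x₁) (h12 : x₁ ≤ x₂) (h2 : x₂ ≤ h) :
    |A y x₁ - A y x₂ + T x₂ - T x₁| ≤
      2 * M / (ρ ^ α * Real.Gamma (α + 1)) * (x₂ ^ ρ - x₁ ^ ρ) ^ α := by
  obtain ⟨hyc, hyK⟩ := hy
  have hTc : Continuous T := by rw [funext hT]; fun_prop
  have hGc : IsCompact G := hG ▸ isCompact_Icc.setOf_abs_sub_le hTc K
  have hh' : h ≤ hstar := by rw [hh]; split_ifs <;> simp
  have hmemG : ∀ t ∈ Icc 0 h, (t, y t) ∈ G := fun t ht ↦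
    hG ▸ ⟨⟨ht.1, ht.2.trans hh'⟩, hyK t ht⟩
  set g : ℝ → ℝ := fun t ↦ f t (y t)
  have hAg : ∀ x, A y x = T x + katugampolaIntegral ρ α g x := hA y
  have hdiff : A y x₁ - A y x₂ + T x₂ - T x₁ =
      katugampolaIntegral ρ α g x₁ - katugampolaIntegral ρ α g x₂ := by
    rw [hAg, hAg]; ring
  have hgM : ∀ t ∈ Icc 0 h, |g t| ≤ M := fun t ht ↦
    hM ▸ le_csSup (hGc.bddAbove_image hf.abs) ⟨(t, y t), hmemG t ht, rfl⟩
  rw [hdiff]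
  exact abs_katugampolaIntegral_sub_le hρ hα hα1 h1 h12
    ((hf.comp (continuousOn_id.prodMk hyc) hmemG).mono (Icc_subset_Icc_right h2))
    fun t ht ↦ hgM t ⟨ht.1, ht.2.trans h2⟩

theorem stmt5
    (ρ α : ℝ) (hρ : 0 < ρ) (hα : 0 < α)
    (m : ℕ) (hm : m = ⌈α⌉₊)
    (y₀ : ℕ → ℝ) (K hstar : ℝ) (hK : 0 < K) (hhstar : 0 < hstar)
    (T : ℝ → ℝ)
    (hT : ∀ x : ℝ, T x = ∑ k ∈ Finset.range m, x ^ k / (Nat.factorial k) * y₀ k)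
    (f : ℝ → ℝ → ℝ)
    (G : Set (ℝ × ℝ))
    (hG : G = {p : ℝ × ℝ | p.1 ∈ Set.Icc 0 hstar ∧ |p.2 - T p.1| ≤ K})
    (hf : ContinuousOn (fun p : ℝ × ℝ => f p.1 p.2) G)
    (M : ℝ) (hM : M = sSup ((fun p : ℝ × ℝ => |f p.1 p.2|) '' G))
    (h : ℝ)
    (hh : h = if M = 0 then hstar
      else min hstar ((K * Real.Gamma (α + 1) * ρ ^ α / M) ^ (1 / α)))
    (A : (ℝ → ℝ) → ℝ → ℝ)
    (hA : ∀ (y : ℝ → ℝ) (x : ℝ), A y x = T x + ρ ^ (1 - α) / Real.Gamma α *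
      ∫ t in (0:ℝ)..x, (x ^ ρ - t ^ ρ) ^ (α - 1) * t ^ (ρ - 1) * f t (y t))
    (hα1 : α ≤ 1)
    (y : ℝ → ℝ)
    (hy : ContinuousOn y (Set.Icc 0 h) ∧ ∀ s ∈ Set.Icc 0 h, |y s - T s| ≤ K)
    (x₁ x₂ : ℝ) (h1 : 0 ≤ x₁) (h12 : x₁ ≤ x₂) (h2 : x₂ ≤ h) :
    |A y x₁ - A y x₂ + T x₂ - T x₁| ≤
      2 * M / (ρ ^ α * Real.Gamma (α + 1)) * (x₂ ^ ρ - x₁ ^ ρ) ^ α :=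
  stmt5_general ρ α hρ hα m y₀ K hstar T hT f G hG hf M hM h hh A hA hα1 y hy x₁ x₂ h1 h12 h2
end

section
/- Suppose α > 1. For every y ∈ U and all 0 ≤ x₁ ≤ x₂ ≤ h, |(Ay)(x₁) − (Ay)(x₂) + T(x₂) − T(x₁)| ≤ (M / (ρ^α Γ(α+1))) [(x₂^ρ − x₁^ρ)^α + x₂^{ρα} − x₁^{ρα}]. -/
open Set MeasureTheory intervalIntegral Filter

/-!
Write `k_x(t) = (x^ρ - t^ρ)^(α-1) t^(ρ-1)`. The quantity to bound is the fractional-integral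
constant times `∫₀^{x₁} k_{x₁} F - ∫₀^{x₂} k_{x₂} F` with `F t = f t (y t)`. Splitting the second
integral at `x₁`, and using `k_{x₁} ≤ k_{x₂}` on `[0, x₁]` (this is where `α ≥ 1` enters) and
`|F| ≤ M`, the difference is at most
`M (∫₀^{x₂} k_{x₂} - ∫₀^{x₁} k_{x₁}) = M (x₂^{ρα} - x₁^{ρα}) / (ρα)`, which is the claimed bound without the nonnegative term `(x₂^ρ - x₁^ρ)^α`.
`M` is a supremum, hence a genuine bound for `|f|` on `G` only because `G` is compact.
-/

theorem isCompact_Icc_tube {T : ℝ → ℝ} (hT : Continuous T) (a b K : ℝ) :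
    IsCompact {p : ℝ × ℝ | p.1 ∈ Icc a b ∧ |p.2 - T p.1| ≤ K} := by
  have hclosed : IsClosed {p : ℝ × ℝ | p.1 ∈ Icc a b ∧ |p.2 - T p.1| ≤ K} :=
    (isClosed_Icc.preimage continuous_fst).inter (isClosed_le
      (continuous_snd.sub (hT.comp continuous_fst)).abs continuous_const)
  have hshear : Continuous fun q : ℝ × ℝ => (q.1, T q.1 + q.2) := by fun_prop
  refine (((isCompact_Icc (a := a) (b := b)).prod (isCompact_Icc (a := -K) (b := K))).image
    hshear).of_isClosed_subset hclosed ?_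
  rintro ⟨s, v⟩ ⟨hs, hv⟩
  exact ⟨(s, v - T s), ⟨hs, abs_le.1 hv⟩, by simp⟩

theorem abs_integral_sub_integral_le_of_le {k₁ k₂ g : ℝ → ℝ} {c a b M : ℝ}
    (hca : c ≤ a) (hab : a ≤ b)
    (hk : ∀ t ∈ Icc c a, k₁ t ≤ k₂ t) (hk₂ : ∀ t ∈ Icc a b, 0 ≤ k₂ t)
    (hgM : ∀ t ∈ Icc c b, |g t| ≤ M)
    (hk₁i : IntervalIntegrable k₁ volume c a) (hk₂i : IntervalIntegrable k₂ volume c b)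
    (hk₁g : IntervalIntegrable (fun t => k₁ t * g t) volume c a)
    (hk₂g : IntervalIntegrable (fun t => k₂ t * g t) volume c b) :
    |(∫ t in c..a, k₁ t * g t) - ∫ t in c..b, k₂ t * g t|
      ≤ M * ((∫ t in c..b, k₂ t) - ∫ t in c..a, k₁ t) := by
  have hca_sub : uIcc c a ⊆ uIcc c b := by
    rw [uIcc_of_le hca, uIcc_of_le (hca.trans hab)]; exact Icc_subset_Icc_right hab
  have hab_sub : uIcc a b ⊆ uIcc c b := by
    rw [uIcc_of_le hab, uIcc_of_le (hca.trans hab)]; exact Icc_subset_Icc_left hca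
  have split {φ : ℝ → ℝ} (hφ : IntervalIntegrable φ volume c b) :
      ∫ t in c..b, φ t = (∫ t in c..a, φ t) + ∫ t in a..b, φ t :=
    (integral_add_adjacent_intervals (hφ.mono_set hca_sub) (hφ.mono_set hab_sub)).symm
  have hfirst : ‖∫ t in c..a, (k₁ t * g t - k₂ t * g t)‖ ≤ ∫ t in c..a, (k₂ t - k₁ t) * M := by
    refine norm_integral_le_of_norm_le hca (ae_of_all _ fun t ht => ?_)
      (((hk₂i.mono_set hca_sub).sub hk₁i).mul_const M)
    have ht : t ∈ Icc c a := Ioc_subset_Icc_self ht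
    rw [Real.norm_eq_abs, ← sub_mul, abs_mul, abs_sub_comm, abs_of_nonneg (sub_nonneg.2 (hk t ht))]
    exact mul_le_mul_of_nonneg_left (hgM t ⟨ht.1, ht.2.trans hab⟩) (sub_nonneg.2 (hk t ht))
  have hsecond : ‖∫ t in a..b, k₂ t * g t‖ ≤ ∫ t in a..b, k₂ t * M := by
    refine norm_integral_le_of_norm_le hab (ae_of_all _ fun t ht => ?_)
      ((hk₂i.mono_set hab_sub).mul_const M)
    have ht : t ∈ Icc a b := Ioc_subset_Icc_self ht
    rw [Real.norm_eq_abs, abs_mul, abs_of_nonneg (hk₂ t ht)]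
    exact mul_le_mul_of_nonneg_left (hgM t ⟨hca.trans ht.1, ht.2⟩) (hk₂ t ht)
  rw [Real.norm_eq_abs, integral_sub hk₁g (hk₂g.mono_set hca_sub),
    intervalIntegral.integral_mul_const, integral_sub (hk₂i.mono_set hca_sub) hk₁i] at hfirst
  rw [Real.norm_eq_abs, intervalIntegral.integral_mul_const] at hsecond
  rw [split hk₂g, split hk₂i, ← sub_sub]
  linarith [abs_sub ((∫ t in c..a, k₁ t * g t) - ∫ t in c..a, k₂ t * g t) (∫ t in a..b, k₂ t * g t)]

section RpowKernel

variable {ρ α : ℝ}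

theorem intervalIntegrable_rpow_kernel_mul (hρ : 0 < ρ) (hα : 1 ≤ α) (X : ℝ) {g : ℝ → ℝ}
    {a b : ℝ} (hg : ContinuousOn g (uIcc a b)) :
    IntervalIntegrable (fun t => (X - t ^ ρ) ^ (α - 1) * t ^ (ρ - 1) * g t) volume a b := by
  have hpow : IntervalIntegrable (fun t : ℝ => t ^ (ρ - 1)) volume a b :=
    intervalIntegrable_rpow' (by linarith)
  have hcont : Continuous fun t : ℝ => (X - t ^ ρ) ^ (α - 1) := by
    have := Real.continuous_rpow_const hρ.le
    exact (Real.continuous_rpow_const (sub_nonneg.2 hα)).comp (continuous_const.sub this)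
  convert hpow.mul_continuousOn (hcont.continuousOn.mul hg) using 1
  ext t
  simp only [Pi.mul_apply]
  ring

theorem intervalIntegrable_rpow_kernel (hρ : 0 < ρ) (hα : 1 ≤ α) (X a b : ℝ) :
    IntervalIntegrable (fun t => (X - t ^ ρ) ^ (α - 1) * t ^ (ρ - 1)) volume a b := by
  simpa using intervalIntegrable_rpow_kernel_mul hρ hα X (g := fun _ => 1) continuousOn_const

theorem integral_rpow_kernel (hρ : 0 < ρ) (hα : 1 ≤ α) (X : ℝ) {x : ℝ} (hx : 0 ≤ x) :
    ∫ t in (0 : ℝ)..x, (X - t ^ ρ) ^ (α - 1) * t ^ (ρ - 1)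
      = (X ^ α - (X - x ^ ρ) ^ α) / (ρ * α) := by
  have hα₀ : 0 < α := by linarith
  have hderiv : ∀ t ∈ Ioo 0 x, HasDerivAt (fun t => -(X - t ^ ρ) ^ α / (ρ * α))
      ((X - t ^ ρ) ^ (α - 1) * t ^ (ρ - 1)) t := by
    intro t ht
    have hinner := (Real.hasDerivAt_rpow_const (p := ρ) (Or.inl ht.1.ne')).const_sub X
    refine (((Real.hasDerivAt_rpow_const (Or.inr hα)).comp t hinner).neg.div_const
      (ρ * α)).congr_deriv ?_
    field_simp
  have hcont : Continuous fun t : ℝ => -(X - t ^ ρ) ^ α / (ρ * α) := by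
    have := Real.continuous_rpow_const hρ.le
    exact ((Real.continuous_rpow_const hα₀.le).comp (continuous_const.sub this)).neg.div_const _
  rw [integral_eq_sub_of_hasDerivAt_of_le hx hcont.continuousOn hderiv
    (intervalIntegrable_rpow_kernel hρ hα X 0 x), Real.zero_rpow hρ.ne', sub_zero]
  ring

theorem integral_rpow_kernel_self (hρ : 0 < ρ) (hα : 1 ≤ α) {x : ℝ} (hx : 0 ≤ x) :
    ∫ t in (0 : ℝ)..x, (x ^ ρ - t ^ ρ) ^ (α - 1) * t ^ (ρ - 1) = x ^ (ρ * α) / (ρ * α) := by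
  rw [integral_rpow_kernel hρ hα _ hx, sub_self, Real.zero_rpow (by linarith), sub_zero,
    Real.rpow_mul hx]

theorem abs_integral_rpow_kernel_mul_sub_le (hρ : 0 < ρ) (hα : 1 ≤ α) {g : ℝ → ℝ} {x₁ x₂ M : ℝ}
    (h1 : 0 ≤ x₁) (h12 : x₁ ≤ x₂) (hg : ContinuousOn g (Icc 0 x₂))
    (hgM : ∀ t ∈ Icc 0 x₂, |g t| ≤ M) :
    |(∫ t in (0 : ℝ)..x₁, (x₁ ^ ρ - t ^ ρ) ^ (α - 1) * t ^ (ρ - 1) * g t)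
        - ∫ t in (0 : ℝ)..x₂, (x₂ ^ ρ - t ^ ρ) ^ (α - 1) * t ^ (ρ - 1) * g t|
      ≤ M * ((x₂ ^ (ρ * α) - x₁ ^ (ρ * α)) / (ρ * α)) := by
  have hx₂ : 0 ≤ x₂ := h1.trans h12
  have hkernel_mono : ∀ t ∈ Icc 0 x₁, (x₁ ^ ρ - t ^ ρ) ^ (α - 1) * t ^ (ρ - 1)
      ≤ (x₂ ^ ρ - t ^ ρ) ^ (α - 1) * t ^ (ρ - 1) := fun t ht => by
    have htx₁ : t ^ ρ ≤ x₁ ^ ρ := Real.rpow_le_rpow ht.1 ht.2 hρ.le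
    gcongr
    exact Real.rpow_nonneg ht.1 _
  have hkernel_nonneg : ∀ t ∈ Icc x₁ x₂, 0 ≤ (x₂ ^ ρ - t ^ ρ) ^ (α - 1) * t ^ (ρ - 1) :=
    fun t ht => mul_nonneg
      (Real.rpow_nonneg (sub_nonneg.2 (Real.rpow_le_rpow (h1.trans ht.1) ht.2 hρ.le)) _)
      (Real.rpow_nonneg (h1.trans ht.1) _)
  have hg₁ : ContinuousOn g (uIcc 0 x₁) := by
    rw [uIcc_of_le h1]; exact hg.mono (Icc_subset_Icc_right h12)
  have hg₂ : ContinuousOn g (uIcc 0 x₂) := by rwa [uIcc_of_le hx₂]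
  have := abs_integral_sub_integral_le_of_le h1 h12 hkernel_mono hkernel_nonneg hgM
    (intervalIntegrable_rpow_kernel hρ hα _ _ _) (intervalIntegrable_rpow_kernel hρ hα _ _ _)
    (intervalIntegrable_rpow_kernel_mul hρ hα _ hg₁)
    (intervalIntegrable_rpow_kernel_mul hρ hα _ hg₂)
  rwa [integral_rpow_kernel_self hρ hα hx₂, integral_rpow_kernel_self hρ hα h1, ← sub_div] at this

end RpowKernel

theorem stmt6_general
    (ρ α : ℝ) (hρ : 0 < ρ)
    (m : ℕ)
    (y₀ : ℕ → ℝ) (K hstar : ℝ)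
    (T : ℝ → ℝ)
    (hT : ∀ x : ℝ, T x = ∑ k ∈ Finset.range m, x ^ k / (Nat.factorial k) * y₀ k)
    (f : ℝ → ℝ → ℝ)
    (G : Set (ℝ × ℝ))
    (hG : G = {p : ℝ × ℝ | p.1 ∈ Set.Icc 0 hstar ∧ |p.2 - T p.1| ≤ K})
    (hf : ContinuousOn (fun p : ℝ × ℝ => f p.1 p.2) G)
    (M : ℝ) (hM : M = sSup ((fun p : ℝ × ℝ => |f p.1 p.2|) '' G))
    (h : ℝ)
    (hh : h = if M = 0 then hstar
      else min hstar ((K * Real.Gamma (α + 1) * ρ ^ α / M) ^ (1 / α)))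
    (A : (ℝ → ℝ) → ℝ → ℝ)
    (hA : ∀ (y : ℝ → ℝ) (x : ℝ), A y x = T x + ρ ^ (1 - α) / Real.Gamma α *
      ∫ t in (0:ℝ)..x, (x ^ ρ - t ^ ρ) ^ (α - 1) * t ^ (ρ - 1) * f t (y t))
    (hα1 : 1 < α)
    (y : ℝ → ℝ)
    (hy : ContinuousOn y (Set.Icc 0 h) ∧ ∀ s ∈ Set.Icc 0 h, |y s - T s| ≤ K)
    (x₁ x₂ : ℝ) (h1 : 0 ≤ x₁) (h12 : x₁ ≤ x₂) (h2 : x₂ ≤ h) :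
    |A y x₁ - A y x₂ + T x₂ - T x₁| ≤
      M / (ρ ^ α * Real.Gamma (α + 1)) *
        ((x₂ ^ ρ - x₁ ^ ρ) ^ α + x₂ ^ (ρ * α) - x₁ ^ (ρ * α)) := by
  have hα : 0 < α := by linarith
  have hT_cont : Continuous T := by
    rw [funext hT]
    fun_prop
  have hh_le : h ≤ hstar := by
    rw [hh]
    split_ifs
    exacts [le_rfl, min_le_left _ _]
  have hyG : ∀ t ∈ Icc 0 h, (t, y t) ∈ G := fun t ht => hG ▸ ⟨⟨ht.1, ht.2.trans hh_le⟩, hy.2 t ht⟩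
  have hfy_le : ∀ t ∈ Icc 0 h, |f t (y t)| ≤ M := by
    have hG_cpt : IsCompact G := hG ▸ isCompact_Icc_tube hT_cont 0 hstar K
    exact fun t ht => hM ▸ le_csSup (hG_cpt.bddAbove_image hf.abs) ⟨_, hyG t ht, rfl⟩
  have hfy_cont : ContinuousOn (fun t => f t (y t)) (Icc 0 h) :=
    hf.comp (continuousOn_id.prodMk hy.1) hyG
  have hM₀ : 0 ≤ M := (abs_nonneg _).trans (hfy_le 0 ⟨le_rfl, h1.trans (h12.trans h2)⟩)
  have hIcc : Icc 0 x₂ ⊆ Icc 0 h := Icc_subset_Icc_right h2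
  have hc₀ : 0 < ρ ^ (1 - α) / Real.Gamma α := by
    have := Real.Gamma_pos_of_pos hα
    positivity
  have hcoef : ρ ^ (1 - α) / Real.Gamma α * (M * ((x₂ ^ (ρ * α) - x₁ ^ (ρ * α)) / (ρ * α)))
      = M / (ρ ^ α * Real.Gamma (α + 1)) * (x₂ ^ (ρ * α) - x₁ ^ (ρ * α)) := by
    rw [Real.rpow_sub hρ, Real.rpow_one, Real.Gamma_add_one hα.ne']
    field_simp
  have hgap : 0 ≤ M / (ρ ^ α * Real.Gamma (α + 1)) * (x₂ ^ ρ - x₁ ^ ρ) ^ α := by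
    have := Real.Gamma_pos_of_pos (by linarith : 0 < α + 1)
    have := Real.rpow_nonneg (sub_nonneg.2 (Real.rpow_le_rpow h1 h12 hρ.le)) α
    positivity
  calc |A y x₁ - A y x₂ + T x₂ - T x₁|
      = ρ ^ (1 - α) / Real.Gamma α *
          |(∫ t in (0 : ℝ)..x₁, (x₁ ^ ρ - t ^ ρ) ^ (α - 1) * t ^ (ρ - 1) * f t (y t))
            - ∫ t in (0 : ℝ)..x₂, (x₂ ^ ρ - t ^ ρ) ^ (α - 1) * t ^ (ρ - 1) * f t (y t)| := by
        rw [← abs_of_pos hc₀, ← abs_mul, hA, hA]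
        congr 1
        ring
    _ ≤ ρ ^ (1 - α) / Real.Gamma α * (M * ((x₂ ^ (ρ * α) - x₁ ^ (ρ * α)) / (ρ * α))) := by
        gcongr
        exact abs_integral_rpow_kernel_mul_sub_le hρ hα1.le h1 h12 (hfy_cont.mono hIcc)
          fun t ht => hfy_le t (hIcc ht)
    _ = M / (ρ ^ α * Real.Gamma (α + 1)) * (x₂ ^ (ρ * α) - x₁ ^ (ρ * α)) := hcoef
    _ ≤ M / (ρ ^ α * Real.Gamma (α + 1)) *
          ((x₂ ^ ρ - x₁ ^ ρ) ^ α + x₂ ^ (ρ * α) - x₁ ^ (ρ * α)) := by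
        linarith

theorem stmt6
    (ρ α : ℝ) (hρ : 0 < ρ) (hα : 0 < α)
    (m : ℕ) (hm : m = ⌈α⌉₊)
    (y₀ : ℕ → ℝ) (K hstar : ℝ) (hK : 0 < K) (hhstar : 0 < hstar)
    (T : ℝ → ℝ)
    (hT : ∀ x : ℝ, T x = ∑ k ∈ Finset.range m, x ^ k / (Nat.factorial k) * y₀ k)
    (f : ℝ → ℝ → ℝ)
    (G : Set (ℝ × ℝ))
    (hG : G = {p : ℝ × ℝ | p.1 ∈ Set.Icc 0 hstar ∧ |p.2 - T p.1| ≤ K})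
    (hf : ContinuousOn (fun p : ℝ × ℝ => f p.1 p.2) G)
    (M : ℝ) (hM : M = sSup ((fun p : ℝ × ℝ => |f p.1 p.2|) '' G))
    (h : ℝ)
    (hh : h = if M = 0 then hstar
      else min hstar ((K * Real.Gamma (α + 1) * ρ ^ α / M) ^ (1 / α)))
    (A : (ℝ → ℝ) → ℝ → ℝ)
    (hA : ∀ (y : ℝ → ℝ) (x : ℝ), A y x = T x + ρ ^ (1 - α) / Real.Gamma α *
      ∫ t in (0:ℝ)..x, (x ^ ρ - t ^ ρ) ^ (α - 1) * t ^ (ρ - 1) * f t (y t))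
    (hα1 : 1 < α)
    (y : ℝ → ℝ)
    (hy : ContinuousOn y (Set.Icc 0 h) ∧ ∀ s ∈ Set.Icc 0 h, |y s - T s| ≤ K)
    (x₁ x₂ : ℝ) (h1 : 0 ≤ x₁) (h12 : x₁ ≤ x₂) (h2 : x₂ ≤ h) :
    |A y x₁ - A y x₂ + T x₂ - T x₁| ≤
      M / (ρ ^ α * Real.Gamma (α + 1)) *
        ((x₂ ^ ρ - x₁ ^ ρ) ^ α + x₂ ^ (ρ * α) - x₁ ^ (ρ * α)) :=
  stmt6_general ρ α hρ m y₀ K hstar T hT f G hG hf M hM h hh A hA hα1 y hy x₁ x₂ h1 h12 h2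
end
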